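/- arXiv:2405.10669 — 4 statements merged into one kernel-verified Lean document; each statement's English description precedes it below -/
import Mathlib

section
/- Let q : (0,∞) → ℝ be continuous and let v : (0,∞) → ℂ be twice continuously differentiable with v''(r) = q(r) v(r) for all r > 0. Suppose v(r) → 0 and v'(r) → 0 as r → 0⁺, and suppose there exists c ∈ ℂ such that v(r) - c·e^{ir} → 0 and v'(r) - i c·e^{ir} → 0 as r → ∞. Then c = 0. -/
open Filter Complex

/-- A solution of a real-potential Schrödinger equation vanishing to first
order at the cone tip and purely outgoing at infinity has vanishing outgoing
amplitude. -/
theorem outgoing_amplitude_vanishes (q : ℝ → ℝ) (hq : ContinuousOn q (Set.Ioi 0))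
    (v : ℝ → ℂ)
    (hv : ∀ r ∈ Set.Ioi (0 : ℝ), DifferentiableAt ℝ v r)
    (hv' : ∀ r ∈ Set.Ioi (0 : ℝ), DifferentiableAt ℝ (deriv v) r)
    (hv'' : ContinuousOn (deriv (deriv v)) (Set.Ioi 0))
    (hode : ∀ r ∈ Set.Ioi (0 : ℝ), deriv (deriv v) r = (q r : ℂ) * v r)
    (h0 : Filter.Tendsto v (nhdsWithin 0 (Set.Ioi 0)) (nhds 0))
    (h0' : Filter.Tendsto (deriv v) (nhdsWithin 0 (Set.Ioi 0)) (nhds 0))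
    (c : ℂ)
    (hc : Filter.Tendsto (fun r : ℝ => v r - c * Complex.exp (Complex.I * (r : ℂ)))
      Filter.atTop (nhds 0))
    (hc' : Filter.Tendsto
      (fun r : ℝ => deriv v r - Complex.I * c * Complex.exp (Complex.I * (r : ℂ)))
      Filter.atTop (nhds 0)) :
    c = 0 := by
  set e : ℝ → ℂ := fun r => Complex.exp (Complex.I * (r : ℂ)) with he
  have hee : ∀ r : ℝ, e r * (starRingEnd ℂ) (e r) = 1 := by
    intro r
    simp only [he, ← Complex.exp_conj, map_mul, Complex.conj_I, Complex.conj_ofReal,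
      ← Complex.exp_add]
    rw [show Complex.I * (r : ℂ) + -Complex.I * (r : ℂ) = 0 by ring, Complex.exp_zero]
  have hne : ∀ r : ℝ, ‖e r‖ = 1 := by
    intro r
    simp [he, Complex.norm_exp]
  set W : ℝ → ℂ := fun r =>
    v r * (starRingEnd ℂ) (deriv v r) - deriv v r * (starRingEnd ℂ) (v r) with hW
  -- derivative of W is zero on Ioi 0
  have hWderiv : ∀ r ∈ Set.Ioi (0 : ℝ), HasDerivAt W 0 r := by
    intro r hr
    have h1 : HasDerivAt v (deriv v r) r := (hv r hr).hasDerivAt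
    have h2 : HasDerivAt (deriv v) (deriv (deriv v) r) r := (hv' r hr).hasDerivAt
    have h1s : HasDerivAt (fun x => (starRingEnd ℂ) (v x)) ((starRingEnd ℂ) (deriv v r)) r :=
      h1.star
    have h2s : HasDerivAt (fun x => (starRingEnd ℂ) (deriv v x))
        ((starRingEnd ℂ) (deriv (deriv v) r)) r := h2.star
    have := ((h1.mul h2s).sub (h2.mul h1s))
    refine this.congr_deriv ?_
    rw [hode r hr]
    simp only [map_mul, Complex.conj_ofReal]
    ring
  -- W is constant on Ioi 0
  have hWconst : ∀ r ∈ Set.Ioi (0 : ℝ), W r = W 1 := by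
    have key : ∀ a b : ℝ, 0 < a → a ≤ b → W b = W a := by
      intro a b ha hab
      have hcont : ContinuousOn W (Set.Icc a b) := fun x hx =>
        ((hWderiv x (lt_of_lt_of_le ha hx.1)).continuousAt).continuousWithinAt
      have hder : ∀ x ∈ Set.Ico a b, HasDerivWithinAt W 0 (Set.Ici x) x := fun x hx =>
        (hWderiv x (lt_of_lt_of_le ha hx.1)).hasDerivWithinAt
      exact constant_of_has_deriv_right_zero hcont hder b ⟨hab, le_rfl⟩
    intro r hr
    rcases le_total r 1 with h | h
    · exact (key r 1 hr h).symm
    · exact key 1 r one_pos h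
  -- limit of W at 0 is 0
  have hW0 : Filter.Tendsto W (nhdsWithin 0 (Set.Ioi 0)) (nhds 0) := by
    have hc0 : Filter.Tendsto (fun r => (starRingEnd ℂ) (v r)) (nhdsWithin 0 (Set.Ioi 0))
        (nhds 0) := by
      have := (Complex.continuous_conj.tendsto 0).comp h0
      simpa [Function.comp_def] using this
    have hc0' : Filter.Tendsto (fun r => (starRingEnd ℂ) (deriv v r))
        (nhdsWithin 0 (Set.Ioi 0)) (nhds 0) := by
      have := (Complex.continuous_conj.tendsto 0).comp h0'
      simpa [Function.comp_def] using this
    have := (h0.mul hc0').sub (h0'.mul hc0)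
    simpa using this
  have hWK : Filter.Tendsto W (nhdsWithin 0 (Set.Ioi 0)) (nhds (W 1)) := by
    refine tendsto_const_nhds.congr' ?_
    filter_upwards [self_mem_nhdsWithin] with r hr
    exact (hWconst r hr).symm
  have hK0 : W 1 = 0 := tendsto_nhds_unique hWK hW0
  -- limit of W at ∞
  set P : ℝ → ℂ := fun r => v r * (starRingEnd ℂ) (e r) with hP
  set Q : ℝ → ℂ := fun r => deriv v r * (starRingEnd ℂ) (e r) with hQ
  have hPc : Filter.Tendsto P Filter.atTop (nhds c) := by
    have hsub : Filter.Tendsto (fun r => P r - c) Filter.atTop (nhds 0) := by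
      refine squeeze_zero_norm (fun r => ?_) (show Filter.Tendsto (fun r => ‖v r - c * e r‖) Filter.atTop (nhds 0) by simpa using hc.norm)
      have : P r - c = (v r - c * e r) * (starRingEnd ℂ) (e r) := by
        simp only [hP]; linear_combination c * hee r
      rw [this, norm_mul, RCLike.norm_conj, hne r, mul_one]
    have := hsub.add (tendsto_const_nhds (x := c))
    simpa using this
  have hQc : Filter.Tendsto Q Filter.atTop (nhds (Complex.I * c)) := by
    have hsub : Filter.Tendsto (fun r => Q r - Complex.I * c) Filter.atTop (nhds 0) := by
      refine squeeze_zero_norm (fun r => ?_) (show Filter.Tendsto (fun r => ‖deriv v r - Complex.I * c * e r‖) Filter.atTop (nhds 0) by simpa using hc'.norm)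
      have : Q r - Complex.I * c = (deriv v r - Complex.I * c * e r) * (starRingEnd ℂ) (e r) := by
        simp only [hQ]; linear_combination Complex.I * c * hee r
      rw [this, norm_mul, RCLike.norm_conj, hne r, mul_one]
    have := hsub.add (tendsto_const_nhds (x := Complex.I * c))
    simpa using this
  have hWPQ : ∀ r : ℝ, W r = P r * (starRingEnd ℂ) (Q r) - Q r * (starRingEnd ℂ) (P r) := by
    intro r
    simp only [hW, hP, hQ, map_mul, Complex.conj_conj]
    linear_combination (deriv v r * (starRingEnd ℂ) (v r)
      - v r * (starRingEnd ℂ) (deriv v r)) * hee r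
  have hPQlim : Filter.Tendsto W Filter.atTop
      (nhds (c * (starRingEnd ℂ) (Complex.I * c)
        - Complex.I * c * (starRingEnd ℂ) c)) := by
    have hconjQ := (Complex.continuous_conj.tendsto (Complex.I * c)).comp hQc
    have hconjP := (Complex.continuous_conj.tendsto c).comp hPc
    have := (hPc.mul hconjQ).sub (hQc.mul hconjP)
    refine this.congr fun r => (hWPQ r).symm
  have hWtop : Filter.Tendsto W Filter.atTop (nhds 0) := by
    refine tendsto_const_nhds.congr' ?_
    filter_upwards [eventually_gt_atTop (0 : ℝ)] with r hr
    rw [hWconst r hr, hK0]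
  have hkey : c * (starRingEnd ℂ) (Complex.I * c) - Complex.I * c * (starRingEnd ℂ) c = 0 :=
    tendsto_nhds_unique hPQlim hWtop
  have : (-2 * Complex.I) * (c * (starRingEnd ℂ) c) = 0 := by
    rw [← hkey]; simp only [map_mul, Complex.conj_I]; ring
  have hcc : c * (starRingEnd ℂ) c = 0 := by
    have h2 : (-2 * Complex.I) ≠ 0 := by simp [Complex.I_ne_zero]
    exact (mul_eq_zero.mp this).resolve_left h2
  rw [Complex.mul_conj] at hcc
  have := Complex.normSq_eq_zero.mp (by exact_mod_cast hcc)
  exact this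
end

section
/- Let q : (0,∞) → ℝ be continuous and σ ∈ ℂ with Im(σ²) ≠ 0. Let v : (0,∞) → ℂ be twice continuously differentiable with v''(r) = (q(r) - σ²) v(r) for all r > 0. Assume that v(r) → 0 and v'(r) → 0 as r → 0⁺ and as r → ∞, that |v|², |v'|², and |q|·|v|² are integrable on (0,∞), and that v·conj(v') has limit 0 at both endpoints. Then v ≡ 0. -/
/-- Uniqueness for the Schrödinger equation `v'' = (q - σ²) v` with real `q`
and spectral parameter with `Im(σ²) ≠ 0`. -/
theorem uniqueness_upper_half_plane (q : ℝ → ℝ) (hq : ContinuousOn q (Set.Ioi 0))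
    (σ : ℂ) (hσ : (σ ^ 2).im ≠ 0)
    (v : ℝ → ℂ)
    (hv : ∀ r ∈ Set.Ioi (0 : ℝ), DifferentiableAt ℝ v r)
    (hv' : ∀ r ∈ Set.Ioi (0 : ℝ), DifferentiableAt ℝ (deriv v) r)
    (hv'' : ContinuousOn (deriv (deriv v)) (Set.Ioi 0))
    (hode : ∀ r ∈ Set.Ioi (0 : ℝ), deriv (deriv v) r = ((q r : ℂ) - σ ^ 2) * v r)
    (h0 : Filter.Tendsto v (nhdsWithin 0 (Set.Ioi 0)) (nhds 0))
    (h0' : Filter.Tendsto (deriv v) (nhdsWithin 0 (Set.Ioi 0)) (nhds 0))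
    (hinf : Filter.Tendsto v Filter.atTop (nhds 0))
    (hinf' : Filter.Tendsto (deriv v) Filter.atTop (nhds 0))
    (hi1 : MeasureTheory.IntegrableOn (fun r => ‖v r‖ ^ 2) (Set.Ioi 0))
    (hi2 : MeasureTheory.IntegrableOn (fun r => ‖deriv v r‖ ^ 2) (Set.Ioi 0))
    (hi3 : MeasureTheory.IntegrableOn (fun r => |q r| * ‖v r‖ ^ 2) (Set.Ioi 0))
    (hw0 : Filter.Tendsto (fun r => v r * (starRingEnd ℂ) (deriv v r))
      (nhdsWithin 0 (Set.Ioi 0)) (nhds 0))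
    (hwinf : Filter.Tendsto (fun r => v r * (starRingEnd ℂ) (deriv v r))
      Filter.atTop (nhds 0)) :
    ∀ r ∈ Set.Ioi (0 : ℝ), v r = 0 := by
  classical
  set W : ℝ → ℝ := fun r => (v r * (starRingEnd ℂ) (deriv v r)).im with hWdef
  set W' : ℝ → ℝ := fun r => (σ ^ 2).im * ‖v r‖ ^ 2 with hW'def
  -- derivative of W
  have hW : ∀ x ∈ Set.Ioi (0 : ℝ), HasDerivAt W (W' x) x := by
    intro x hx
    have h1 : HasDerivAt v (deriv v x) x := (hv x hx).hasDerivAt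
    have h2 : HasDerivAt (deriv v) (deriv (deriv v) x) x := (hv' x hx).hasDerivAt
    have h3 : HasDerivAt (fun r => (starRingEnd ℂ) (deriv v r))
        (star (deriv (deriv v) x)) x := h2.star
    have h4 := h1.mul h3
    have h5 := Complex.imCLM.hasFDerivAt.comp_hasDerivAt x h4
    have h6 : (Complex.imCLM (deriv v x * star (deriv v x)
        + v x * star (deriv (deriv v) x))) = W' x := by
      rw [hode x hx]
      have hz := Complex.mul_conj (deriv v x)
      simp only [Complex.imCLM_apply, hW'def]
      have : v x * star (((q x : ℂ) - σ ^ 2) * v x)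
          = (starRingEnd ℂ) ((q x : ℂ) - σ ^ 2) * (v x * (starRingEnd ℂ) (v x)) := by
        simp only [star_mul']
        ring_nf
        rfl
      rw [show star (deriv v x) = (starRingEnd ℂ) (deriv v x) from rfl, this,
        Complex.mul_conj, Complex.mul_conj]
      simp only [Complex.add_im, Complex.mul_im, Complex.ofReal_im, Complex.ofReal_re,
        Complex.conj_im, Complex.conj_re, Complex.sub_im, Complex.sub_re,
        Complex.normSq_eq_norm_sq]
      ring
    rw [← h6]
    exact h5
  -- W tends to 0 at infinity
  have hWinf : Filter.Tendsto W Filter.atTop (nhds 0) := by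
    have := (Complex.continuous_im.tendsto 0).comp hwinf
    exact this
  -- key identity on Ioi a for a > 0
  have key : ∀ a : ℝ, 0 < a →
      (σ ^ 2).im * ∫ x in Set.Ioi a, ‖v x‖ ^ 2 = - W a := by
    intro a ha
    have hderiv : ∀ x ∈ Set.Ici a, HasDerivAt W (W' x) x := fun x hx =>
      hW x (lt_of_lt_of_le ha hx)
    have hsub : Set.Ioi a ⊆ Set.Ioi 0 := Set.Ioi_subset_Ioi ha.le
    have hint : MeasureTheory.IntegrableOn W' (Set.Ioi a) :=
      ((hi1.mono_set hsub).const_mul _)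
    have := MeasureTheory.integral_Ioi_of_hasDerivAt_of_tendsto' hderiv hint hWinf
    rw [MeasureTheory.integral_const_mul] at this
    rw [this]; ring
  -- sequence tending to 0 from the right
  set a : ℕ → ℝ := fun n => 1 / (n + 1) with hadef
  have hapos : ∀ n, 0 < a n := fun n => by positivity
  have ha0 : Filter.Tendsto a Filter.atTop (nhdsWithin 0 (Set.Ioi 0)) := by
    apply tendsto_nhdsWithin_of_tendsto_nhds_of_eventually_within
    · exact tendsto_one_div_add_atTop_nhds_zero_nat
    · exact Filter.Eventually.of_forall fun n => hapos n
  -- monotone family of sets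
  have hmono : Monotone (fun n : ℕ => Set.Ioi (a n)) := by
    intro n m hnm
    apply Set.Ioi_subset_Ioi
    apply one_div_le_one_div_of_le (by positivity)
    exact_mod_cast by omega
  have hUnion : (⋃ n, Set.Ioi (a n)) = Set.Ioi (0 : ℝ) := by
    apply Set.Subset.antisymm
    · exact Set.iUnion_subset fun n => Set.Ioi_subset_Ioi (hapos n).le
    · intro x hx
      obtain ⟨n, hn⟩ := exists_nat_one_div_lt (Set.mem_Ioi.mp hx)
      exact Set.mem_iUnion.2 ⟨n, hn⟩
  have hIntTendsto : Filter.Tendsto (fun n => ∫ x in Set.Ioi (a n), ‖v x‖ ^ 2)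
      Filter.atTop (nhds (∫ x in Set.Ioi (0:ℝ), ‖v x‖ ^ 2)) := by
    have := MeasureTheory.tendsto_setIntegral_of_monotone
      (fun n : ℕ => measurableSet_Ioi) hmono (hUnion ▸ hi1)
    rwa [hUnion] at this
  have hWa : Filter.Tendsto (fun n => - W (a n)) Filter.atTop (nhds 0) := by
    have h := (Complex.continuous_im.tendsto 0).comp (hw0.comp ha0)
    have h' : Filter.Tendsto (fun n => W (a n)) Filter.atTop (nhds 0) := by
      simpa only [Function.comp_def, Complex.zero_im] using h
    have := h'.neg
    rwa [neg_zero] at this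
  have hzero : (σ ^ 2).im * ∫ x in Set.Ioi (0:ℝ), ‖v x‖ ^ 2 = 0 := by
    have h1 : Filter.Tendsto (fun n => (σ ^ 2).im * ∫ x in Set.Ioi (a n), ‖v x‖ ^ 2)
        Filter.atTop (nhds ((σ ^ 2).im * ∫ x in Set.Ioi (0:ℝ), ‖v x‖ ^ 2)) :=
      hIntTendsto.const_mul _
    have h2 : (fun n => (σ ^ 2).im * ∫ x in Set.Ioi (a n), ‖v x‖ ^ 2)
        = fun n => - W (a n) := funext fun n => key (a n) (hapos n)
    rw [h2] at h1
    exact tendsto_nhds_unique h1 hWa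
  have hIntZero : ∫ x in Set.Ioi (0:ℝ), ‖v x‖ ^ 2 = 0 := by
    rcases mul_eq_zero.1 hzero with h | h
    · exact absurd h hσ
    · exact h
  -- conclude v = 0 a.e., then everywhere by continuity
  have hae : (fun x => ‖v x‖ ^ 2) =ᵐ[MeasureTheory.volume.restrict (Set.Ioi (0:ℝ))] 0 := by
    rw [← MeasureTheory.integral_eq_zero_iff_of_nonneg (fun x => by positivity) hi1]
    exact hIntZero
  have hnull : MeasureTheory.volume {x ∈ Set.Ioi (0:ℝ) | v x ≠ 0} = 0 := by
    have h1 : ∀ᵐ x ∂(MeasureTheory.volume.restrict (Set.Ioi (0:ℝ))), v x = 0 := by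
      filter_upwards [hae] with x hx
      have : ‖v x‖ ^ 2 = 0 := hx
      have : ‖v x‖ = 0 := by nlinarith [norm_nonneg (v x)]
      simpa using this
    rw [MeasureTheory.ae_restrict_iff' measurableSet_Ioi] at h1
    have h2 : {x ∈ Set.Ioi (0:ℝ) | v x ≠ 0} ⊆ {x | ¬ (x ∈ Set.Ioi (0:ℝ) → v x = 0)} := by
      intro x hx
      simp only [Set.mem_setOf_eq] at hx ⊢
      intro h
      exact hx.2 (h hx.1)
    exact MeasureTheory.measure_mono_null h2 h1
  -- the bad set is open
  have hopen : IsOpen {x ∈ Set.Ioi (0:ℝ) | v x ≠ 0} := by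
    have hcont : ContinuousOn v (Set.Ioi 0) := fun x hx =>
      (hv x hx).continuousAt.continuousWithinAt
    have hs : {x ∈ Set.Ioi (0:ℝ) | v x ≠ 0} = Set.Ioi (0:ℝ) ∩ v ⁻¹' {0}ᶜ := rfl
    rw [hs]
    exact hcont.isOpen_inter_preimage isOpen_Ioi isOpen_compl_singleton
  have hempty : {x ∈ Set.Ioi (0:ℝ) | v x ≠ 0} = ∅ :=
    hopen.eq_empty_of_measure_zero hnull
  intro r hr
  by_contra hvr
  have : r ∈ ({x ∈ Set.Ioi (0:ℝ) | v x ≠ 0} : Set ℝ) := ⟨hr, hvr⟩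
  rw [hempty] at this
  exact this
end

section
/- Let v : ℝ → ℂ be twice continuously differentiable and define u(t,r) = v(t - r)/r for r > 0. Then ∂_t² u - ∂_r² u - (2/r) ∂_r u = 0 for all t ∈ ℝ and r > 0. Moreover, for ℓ ∈ ℝ, the function r ↦ 1/r lies in the weighted space r^ℓ L²((0,1); r² dr) (i.e. ∫₀¹ |r^{-ℓ} · r^{-1}|² r² dr < ∞) if and only if ℓ < 1/2. -/
open MeasureTheory

lemma sw_hasDerivAt_ofReal (x : ℝ) : HasDerivAt (fun y : ℝ => (y : ℂ)) 1 x := by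
  simpa using (hasDerivAt_id x).ofReal_comp

/-- Outgoing spherical waves `v(t-r)/r` solve the radial wave equation on
(3+1)-dimensional Minkowski space, and `1/r` lies in `r^ℓ L²((0,1); r² dr)`
iff `ℓ < 1/2`. -/
theorem spherical_wave (v : ℝ → ℂ) (hv : ContDiff ℝ 2 v) :
    (∀ t : ℝ, ∀ r : ℝ, 0 < r →
      deriv (fun t' => deriv (fun t'' => v (t'' - r) / (r : ℂ)) t') t
        - deriv (fun r' => deriv (fun r'' : ℝ => v (t - r'') / (r'' : ℂ)) r') r
        - (2 / (r : ℂ)) * deriv (fun r' : ℝ => v (t - r') / (r' : ℂ)) r = 0) ∧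
    (∀ ℓ : ℝ,
      IntegrableOn (fun r : ℝ => (r ^ (-ℓ) * r⁻¹) ^ 2 * r ^ 2) (Set.Ioo 0 1)
        ↔ ℓ < 1 / 2) := by
  have hv1 : Differentiable ℝ v := hv.differentiable (by norm_num)
  set w := deriv v with hwdef
  have hwC : ContDiff ℝ 1 w :=
    ((contDiff_succ_iff_deriv (n := 1)).1 (by exact_mod_cast hv)).2.2
  have hw1 : Differentiable ℝ w := hwC.differentiable one_ne_zero
  set w' := deriv w with hw'def
  constructor
  · intro t r hr
    have hrC : (r : ℂ) ≠ 0 := by exact_mod_cast hr.ne'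
    -- time derivatives
    have hdtt : deriv (fun t' => deriv (fun t'' => v (t'' - r) / (r : ℂ)) t') t
        = w' (t - r) / (r : ℂ) := by
      have hdt : (fun t' => deriv (fun t'' => v (t'' - r) / (r : ℂ)) t')
          = fun t' => w (t' - r) / (r : ℂ) := by
        funext t'
        rw [deriv_div_const, deriv_comp_sub_const]
      rw [hdt, deriv_div_const, deriv_comp_sub_const]
    -- first radial derivative at any x ≠ 0
    have hF : ∀ x : ℝ, x ≠ 0 →
        HasDerivAt (fun r'' : ℝ => v (t - r'') / (r'' : ℂ))
          ((-(w (t - x)) * (x : ℂ) - v (t - x) * 1) / ((x : ℂ)) ^ 2) x := by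
      intro x hx
      have hxC : (x : ℂ) ≠ 0 := by exact_mod_cast hx
      have hnum : HasDerivAt (fun r'' : ℝ => v (t - r'')) (-(w (t - x))) x :=
        (hv1 (t - x)).hasDerivAt.comp_const_sub t x
      exact hnum.div (sw_hasDerivAt_ofReal x) hxC
    have hdr : deriv (fun r' : ℝ => v (t - r') / (r' : ℂ)) r
        = (-(w (t - r)) * (r : ℂ) - v (t - r) * 1) / ((r : ℂ)) ^ 2 :=
      (hF r hr.ne').deriv
    -- second radial derivative
    have hev : (fun r' => deriv (fun r'' : ℝ => v (t - r'') / (r'' : ℂ)) r')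
        =ᶠ[nhds r] fun x : ℝ => (-(w (t - x)) * (x : ℂ) - v (t - x) * 1) / ((x : ℂ)) ^ 2 := by
      filter_upwards [isOpen_Ioi.mem_nhds (show r ∈ Set.Ioi 0 from hr)] with x hx
      exact (hF x (ne_of_gt hx)).deriv
    have hnum2 : HasDerivAt (fun x : ℝ => -(w (t - x)) * (x : ℂ) - v (t - x) * 1)
        ((w' (t - r)) * (r : ℂ) + -(w (t - r)) * 1 - (-(w (t - r)) * 1)) r := by
      have h0 : HasDerivAt (fun x : ℝ => w (t - x)) (-(w' (t - r))) r :=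
        (hw1 (t - r)).hasDerivAt.comp_const_sub t r
      have h1 : HasDerivAt (fun x : ℝ => -(w (t - x))) (w' (t - r)) r := by
        have h1' := h0.neg
        rwa [neg_neg] at h1'
      have h2 : HasDerivAt (fun x : ℝ => v (t - x)) (-(w (t - r))) r :=
        (hv1 (t - r)).hasDerivAt.comp_const_sub t r
      exact (h1.mul (sw_hasDerivAt_ofReal r)).sub (h2.mul_const 1)
    have hden2 : HasDerivAt (fun x : ℝ => ((x : ℂ)) ^ 2) (1 * (r : ℂ) + (r : ℂ) * 1) r := by
      simp only [pow_two]
      exact (sw_hasDerivAt_ofReal r).mul (sw_hasDerivAt_ofReal r)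
    have hr2C : ((r : ℂ)) ^ 2 ≠ 0 := pow_ne_zero _ hrC
    have hdrr : deriv (fun r' => deriv (fun r'' : ℝ => v (t - r'') / (r'' : ℂ)) r') r
        = (((w' (t - r)) * (r : ℂ) + -(w (t - r)) * 1 - (-(w (t - r)) * 1)) * ((r : ℂ)) ^ 2
            - (-(w (t - r)) * (r : ℂ) - v (t - r) * 1) * (1 * (r : ℂ) + (r : ℂ) * 1))
            / (((r : ℂ)) ^ 2) ^ 2 := by
      rw [hev.deriv_eq]
      exact (hnum2.div hden2 hr2C).deriv
    rw [hdtt, hdrr, hdr]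
    field_simp
    ring
  · intro ℓ
    have heq : Set.EqOn (fun r : ℝ => (r ^ (-ℓ) * r⁻¹) ^ 2 * r ^ 2)
        (fun r : ℝ => r ^ (-2 * ℓ)) (Set.Ioo 0 1) := by
      intro r hr
      have hr0 : (0:ℝ) < r := hr.1
      simp only
      rw [mul_pow, ← Real.rpow_natCast (r ^ (-ℓ)) 2, ← Real.rpow_mul hr0.le]
      rw [← Real.rpow_neg_one r, ← Real.rpow_natCast (r ^ (-1:ℝ)) 2, ← Real.rpow_mul hr0.le,
        ← Real.rpow_natCast r 2, ← Real.rpow_add hr0, ← Real.rpow_add hr0]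
      ring_nf
    rw [integrableOn_congr_fun heq measurableSet_Ioo,
      intervalIntegral.integrableOn_Ioo_rpow_iff zero_lt_one]
    constructor <;> intro h <;> linarith
end

section
/- Let A be an n×n complex matrix and ε > 0. Then there exists a Hermitian positive definite matrix H such that for all v ∈ ℂⁿ, (m - ε)·⟨Hv, v⟩ ≤ Re⟨HAv, v⟩ ≤ (M + ε)·⟨Hv, v⟩, where m = min{Re λ : λ an eigenvalue of A} and M = max{Re λ : λ an eigenvalue of A}, and ⟨·,·⟩ denotes the standard Hermitian inner product on ℂⁿ. -/
set_option maxHeartbeats 1000000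


open Matrix
open scoped ComplexOrder

namespace AdaptedInnerAux

open Matrix Finset

set_option linter.unusedSectionVars false

variable {ι : Type} [Fintype ι] [DecidableEq ι]

lemma star_dot_self (w : ι → ℂ) :
    star w ⬝ᵥ w = ((∑ i, Complex.normSq (w i) : ℝ) : ℂ) := by
  simp only [dotProduct, Pi.star_apply, Complex.ofReal_sum]
  exact Finset.sum_congr rfl fun i _ => by
    rw [Complex.star_def, mul_comm, Complex.mul_conj]

/-- squared norm of a vector -/
noncomputable def nsq (w : ι → ℂ) : ℝ := (star w ⬝ᵥ w).re

lemma nsq_eq (w : ι → ℂ) : nsq w = ∑ i, Complex.normSq (w i) := by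
  rw [nsq, star_dot_self, Complex.ofReal_re]

lemma nsq_nonneg (w : ι → ℂ) : 0 ≤ nsq w := by
  rw [nsq_eq]; exact Finset.sum_nonneg fun i _ => Complex.normSq_nonneg _

/-- the (real part of the) quadratic form attached to a matrix -/
noncomputable def qf (B : Matrix ι ι ℂ) (w : ι → ℂ) : ℝ := (star (B *ᵥ w) ⬝ᵥ w).re

/-- The key property: existence of a conjugating matrix pinching the quadratic form. -/
def Claim (A : Matrix ι ι ℂ) (m M ε : ℝ) : Prop :=
  ∃ P : Matrix ι ι ℂ, IsUnit P.det ∧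
    ∀ w : ι → ℂ, (m - ε) * nsq w ≤ qf (P * A * P⁻¹) w ∧
      qf (P * A * P⁻¹) w ≤ (M + ε) * nsq w

lemma spec_iff (A : Matrix ι ι ℂ) (μ : ℂ) :
    μ ∈ spectrum ℂ A ↔ (μ • (1 : Matrix ι ι ℂ) - A).det = 0 := by
  rw [spectrum.mem_iff, Matrix.isUnit_iff_isUnit_det, isUnit_iff_ne_zero, not_ne_iff,
    Algebra.algebraMap_eq_smul_one]

lemma dot_comp {κ : Type} [Fintype κ] (e : κ ≃ ι) (f g : ι → ℂ) :
    (f ∘ e) ⬝ᵥ (g ∘ e) = f ⬝ᵥ g := by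
  simpa [dotProduct] using Equiv.sum_comp e (fun i => f i * g i)

lemma star_comp {κ : Type} (e : κ → ι) (f : ι → ℂ) :
    star (f ∘ e) = (star f) ∘ e := rfl

lemma nsq_comp {κ : Type} [Fintype κ] (e : κ ≃ ι) (f : ι → ℂ) :
    nsq (f ∘ e) = nsq f := by
  rw [nsq, nsq, star_comp, dot_comp]

lemma qf_submatrix {κ : Type} [Fintype κ] [DecidableEq κ] (e : κ ≃ ι)
    (X : Matrix ι ι ℂ) (w : κ → ℂ) :
    qf (X.submatrix e e) w = qf X (w ∘ e.symm) := by
  rw [qf, Matrix.submatrix_mulVec_equiv, star_comp]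
  set u := w ∘ e.symm with hu
  have hw : w = u ∘ e := by funext i; simp [hu]
  rw [hw, dot_comp]
  rfl

lemma claim_transfer {κ : Type} [Fintype κ] [DecidableEq κ] (e : ι ≃ κ)
    (A : Matrix ι ι ℂ) {m M ε : ℝ}
    (h : Claim (A.submatrix e.symm e.symm) m M ε) : Claim A m M ε := by
  obtain ⟨P, hP, hbd⟩ := h
  have hPinv : (P.submatrix e e)⁻¹ = P⁻¹.submatrix e e := by
    apply Matrix.inv_eq_right_inv
    rw [Matrix.submatrix_mul_equiv, Matrix.mul_nonsing_inv _ hP, Matrix.submatrix_one_equiv]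
  have hA : A = (A.submatrix e.symm e.symm).submatrix e e := by
    simp [Matrix.submatrix_submatrix]
  have key : P.submatrix e e * A * (P.submatrix e e)⁻¹ =
      (P * A.submatrix e.symm e.symm * P⁻¹).submatrix e e := by
    rw [hPinv]
    conv_lhs => rw [hA]
    rw [Matrix.submatrix_mul_equiv, Matrix.submatrix_mul_equiv]
  refine ⟨P.submatrix e e, by rwa [Matrix.det_submatrix_equiv_self], fun w => ?_⟩
  rw [key, qf_submatrix]
  have : nsq w = nsq (w ∘ e.symm) := by
    have hw : w = (w ∘ e.symm) ∘ e := by funext i; simp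
    conv_lhs => rw [hw]
    rw [nsq_comp]
  rw [this]
  exact hbd (w ∘ e.symm)

lemma claim_conj (E A : Matrix ι ι ℂ) (hE : IsUnit E.det) {m M ε : ℝ}
    (h : Claim (E⁻¹ * A * E) m M ε) : Claim A m M ε := by
  obtain ⟨P, hP, hbd⟩ := h
  have hinv : (P * E⁻¹)⁻¹ = E * P⁻¹ := by
    apply Matrix.inv_eq_right_inv
    rw [Matrix.mul_assoc, ← Matrix.mul_assoc E⁻¹, Matrix.nonsing_inv_mul _ hE, Matrix.one_mul,
      Matrix.mul_nonsing_inv _ hP]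
  have hdet : IsUnit (P * E⁻¹).det := by
    rw [Matrix.det_mul]
    exact hP.mul (Matrix.isUnit_nonsing_inv_det E hE)
  refine ⟨P * E⁻¹, hdet, fun w => ?_⟩
  have : P * E⁻¹ * A * (P * E⁻¹)⁻¹ = P * (E⁻¹ * A * E) * P⁻¹ := by
    rw [hinv]; noncomm_ring
  rw [this]
  exact hbd w

lemma det_smul_one_sub_conj (E A : Matrix ι ι ℂ) (hE : IsUnit E.det) (μ : ℂ) :
    (μ • (1 : Matrix ι ι ℂ) - E⁻¹ * A * E).det = (μ • (1 : Matrix ι ι ℂ) - A).det := by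
  have h1 : μ • (1 : Matrix ι ι ℂ) - E⁻¹ * A * E = E⁻¹ * (μ • 1 - A) * E := by
    rw [Matrix.mul_sub, Matrix.sub_mul]
    congr 1
    rw [Matrix.mul_smul, Matrix.mul_one, Matrix.smul_mul, Matrix.nonsing_inv_mul _ hE]
  rw [h1, Matrix.det_mul, Matrix.det_mul]
  have h2 : E⁻¹.det * E.det = 1 := by
    rw [← Matrix.det_mul, Matrix.nonsing_inv_mul _ hE, Matrix.det_one]
  calc E⁻¹.det * (μ • (1 : Matrix ι ι ℂ) - A).det * E.det
      = (E⁻¹.det * E.det) * (μ • (1 : Matrix ι ι ℂ) - A).det := by ring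
    _ = (μ • (1 : Matrix ι ι ℂ) - A).det := by rw [h2, one_mul]

lemma det_smul_one_sub_submatrix {κ : Type} [Fintype κ] [DecidableEq κ] (e : κ ≃ ι)
    (A : Matrix ι ι ℂ) (μ : ℂ) :
    (μ • (1 : Matrix κ κ ℂ) - A.submatrix e e).det = (μ • (1 : Matrix ι ι ℂ) - A).det := by
  have : μ • (1 : Matrix κ κ ℂ) - A.submatrix e e
      = (μ • (1 : Matrix ι ι ℂ) - A).submatrix e e := by
    ext i j
    by_cases h : i = j <;>
      simp [Matrix.one_apply, h, Equiv.apply_eq_iff_eq, Matrix.submatrix_apply]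
  rw [this, Matrix.det_submatrix_equiv_self]

lemma abs_mul_abs_le (a b : ℝ) : a * b ≤ (a^2 + b^2)/2 := by nlinarith [sq_nonneg (a - b)]

lemma claim_step {κ : Type} [Fintype κ] [DecidableEq κ] (μ : ℂ) (r : Matrix Unit κ ℂ)
    (A₁ : Matrix κ κ ℂ) (m M ε : ℝ) (hε : 0 < ε) (hm : m ≤ μ.re) (hM : μ.re ≤ M)
    (IH : Claim A₁ m M (ε/2)) :
    Claim (fromBlocks (μ • (1 : Matrix Unit Unit ℂ)) r 0 A₁) m M ε := by
  obtain ⟨Q, hQ, hbd⟩ := IH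
  set B₁ := Q * A₁ * Q⁻¹ with hB₁
  set s : Matrix Unit κ ℂ := r * Q⁻¹ with hs
  set k : ℕ := Fintype.card κ with hk
  have hη0 : 0 < ε / (k+1) := by positivity
  set η : ℝ := ε / (k + 1) with hη
  have hηε : η * (k+1) = ε := by rw [hη]; field_simp
  set c : ℝ := ∑ j, ‖s () j‖ with hc
  have hc0 : 0 ≤ c := Finset.sum_nonneg fun j _ => norm_nonneg _
  have hδ0 : 0 < η / (1 + c) := by positivity
  set δ : ℝ := η / (1 + c) with hδ
  have hδc : δ * (1 + c) = η := by rw [hδ]; field_simp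
  have hsmall : ∀ j, δ * ‖s () j‖ ≤ η := by
    intro j
    have h1 : ‖s () j‖ ≤ c :=
      Finset.single_le_sum (fun j _ => norm_nonneg _) (Finset.mem_univ j)
    nlinarith
  have hδC : (δ : ℂ) ≠ 0 := by exact_mod_cast hδ0.ne'
  have hcancel2 : (δ:ℂ)⁻¹ * (μ * (δ:ℂ)) = μ := by
    rw [mul_comm μ ((δ:ℂ)), ← mul_assoc, inv_mul_cancel₀ hδC, one_mul]
  refine ⟨fromBlocks ((δ:ℂ) • (1 : Matrix Unit Unit ℂ)) 0 0 Q, ?_, ?_⟩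
  · rw [Matrix.det_fromBlocks_zero₂₁]
    refine IsUnit.mul ?_ hQ
    have hd : ((δ:ℂ) • (1 : Matrix Unit Unit ℂ)).det = (δ:ℂ) := by
      simp [Matrix.det_smul]
    rw [hd]
    exact hδC.isUnit
  · have hPinv : (fromBlocks ((δ:ℂ) • (1 : Matrix Unit Unit ℂ)) 0 0 Q)⁻¹ = fromBlocks ((δ:ℂ)⁻¹ • (1 : Matrix Unit Unit ℂ)) 0 0 Q⁻¹ := by
      apply Matrix.inv_eq_right_inv
      rw [Matrix.fromBlocks_multiply]
      simp only [Matrix.smul_mul, Matrix.one_mul, Matrix.mul_zero, Matrix.zero_mul,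
        add_zero, zero_add, Matrix.mul_smul, smul_smul, mul_inv_cancel₀ hδC, inv_mul_cancel₀ hδC, one_smul,
        smul_zero, Matrix.mul_nonsing_inv _ hQ]
      exact Matrix.fromBlocks_one
    have hG : fromBlocks ((δ:ℂ) • (1 : Matrix Unit Unit ℂ)) 0 0 Q * fromBlocks (μ • (1 : Matrix Unit Unit ℂ)) r 0 A₁ *
        (fromBlocks ((δ:ℂ) • (1 : Matrix Unit Unit ℂ)) 0 0 Q)⁻¹ = fromBlocks (μ • (1 : Matrix Unit Unit ℂ)) ((δ:ℂ) • s) 0 B₁ := by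
      rw [hPinv, Matrix.fromBlocks_multiply, Matrix.fromBlocks_multiply]
      simp only [Matrix.smul_mul, Matrix.mul_smul, Matrix.one_mul, Matrix.mul_one,
        Matrix.mul_zero, Matrix.zero_mul, add_zero, zero_add, smul_smul, smul_zero,
        Matrix.mul_assoc]
      rw [hcancel2, hs, hB₁, Matrix.mul_assoc]
    intro w
    rw [hG]
    set x : Unit → ℂ := w ∘ Sum.inl with hx
    set y : κ → ℂ := w ∘ Sum.inr with hy
    have hw : w = Sum.elim x y := by funext i; cases i <;> rfl
    have hstar : ∀ (p : Unit → ℂ) (q : κ → ℂ),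
        star (Sum.elim p q) = Sum.elim (star p) (star q) := by
      intro p q; funext i; cases i <;> rfl
    have hnsq : nsq w = nsq x + nsq y := by
      rw [nsq, hw, hstar, sumElim_dotProduct_sumElim, Complex.add_re]; rfl
    have hmv : fromBlocks (μ • (1 : Matrix Unit Unit ℂ)) ((δ:ℂ) • s) 0 B₁ *ᵥ w =
        Sum.elim (μ • x + (δ:ℂ) • (s *ᵥ y)) (B₁ *ᵥ y) := by
      rw [hw, Matrix.fromBlocks_mulVec]
      have h1 : (Sum.elim x y) ∘ Sum.inl = x := rfl
      have h2 : (Sum.elim x y) ∘ Sum.inr = y := rfl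
      rw [h1, h2, Matrix.zero_mulVec, zero_add, Matrix.smul_mulVec,
        Matrix.smul_mulVec, Matrix.one_mulVec]
    have hqf : qf (fromBlocks (μ • (1 : Matrix Unit Unit ℂ)) ((δ:ℂ) • s) 0 B₁) w =
        (star (μ • x + (δ:ℂ) • (s *ᵥ y)) ⬝ᵥ x).re + qf B₁ y := by
      rw [qf, hmv, hstar]
      conv_lhs => rw [hw]
      rw [sumElim_dotProduct_sumElim, Complex.add_re]
      rfl
    have hsplit : (star (μ • x + (δ:ℂ) • (s *ᵥ y)) ⬝ᵥ x).re =
        μ.re * nsq x + (star ((δ:ℂ) • (s *ᵥ y)) ⬝ᵥ x).re := by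
      rw [star_add, add_dotProduct, Complex.add_re]
      congr 1
      rw [star_smul, smul_dotProduct, star_dot_self]
      simp [Complex.mul_re, nsq_eq]
    set z : ℝ := (star ((δ:ℂ) • (s *ᵥ y)) ⬝ᵥ x).re with hz
    set a : ℝ := ‖x ()‖ with ha
    have hnx : nsq x = a ^ 2 := by
      rw [nsq_eq, ha, Complex.sq_norm]
      simp
    have hny : nsq y = ∑ j, ‖y j‖ ^ 2 := by
      rw [nsq_eq]
      exact Finset.sum_congr rfl fun j _ => (Complex.sq_norm _).symm
    have hzbound : |z| ≤ ε / 2 * (nsq x + nsq y) := by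
      have hzval : star ((δ:ℂ) • (s *ᵥ y)) ⬝ᵥ x =
          (starRingEnd ℂ) ((δ:ℂ) * (s *ᵥ y) ()) * x () := by
        simp [dotProduct, Pi.star_apply, Pi.smul_apply, smul_eq_mul, Complex.star_def]
      have h1 : |z| ≤ ‖star ((δ:ℂ) • (s *ᵥ y)) ⬝ᵥ x‖ := Complex.abs_re_le_norm _
      rw [hzval] at h1
      have h2 : ‖(starRingEnd ℂ) ((δ:ℂ) * (s *ᵥ y) ()) * x ()‖ =
          δ * ‖(s *ᵥ y) ()‖ * a := by
        rw [norm_mul, Complex.norm_conj, norm_mul, Complex.norm_real, Real.norm_eq_abs, abs_of_pos hδ0, ha]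
      rw [h2] at h1
      have h3 : ‖(s *ᵥ y) ()‖ ≤ ∑ j, ‖s () j‖ * ‖y j‖ := by
        refine le_trans (norm_sum_le _ _) ?_
        exact le_of_eq (Finset.sum_congr rfl fun j _ => norm_mul _ _)
      have h4 : δ * ‖(s *ᵥ y) ()‖ * a ≤
          ∑ j, (δ * ‖s () j‖) * (‖y j‖ * a) := by
        calc δ * ‖(s *ᵥ y) ()‖ * a
            ≤ δ * (∑ j, ‖s () j‖ * ‖y j‖) * a := by
              have := mul_le_mul_of_nonneg_left h3 hδ0.le
              exact mul_le_mul_of_nonneg_right this (norm_nonneg _)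
          _ = ∑ j, (δ * ‖s () j‖) * (‖y j‖ * a) := by
              rw [Finset.mul_sum, Finset.sum_mul]
              exact Finset.sum_congr rfl fun j _ => by ring
      have h5 : ∑ j, (δ * ‖s () j‖) * (‖y j‖ * a) ≤
          ∑ j, η * ((‖y j‖ ^ 2 + a ^ 2) / 2) := by
        refine Finset.sum_le_sum fun j _ => ?_
        refine mul_le_mul (hsmall j) (abs_mul_abs_le _ _) ?_ hη0.le
        exact mul_nonneg (norm_nonneg _) (norm_nonneg _)
      have h6 : ∑ j, η * ((‖y j‖ ^ 2 + a ^ 2) / 2) =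
          η / 2 * (nsq y + (k : ℝ) * nsq x) := by
        rw [hny, hnx]
        calc ∑ j, η * ((‖y j‖ ^ 2 + a ^ 2) / 2)
            = ∑ j, (η / 2 * ‖y j‖ ^ 2 + η / 2 * a ^ 2) :=
              Finset.sum_congr rfl fun j _ => by ring
          _ = η / 2 * (∑ j, ‖y j‖ ^ 2) + (k : ℝ) * (η / 2 * a ^ 2) := by
              rw [Finset.sum_add_distrib, ← Finset.mul_sum, Finset.sum_const,
                nsmul_eq_mul, Finset.card_univ, ← hk]
          _ = η / 2 * ((∑ j, ‖y j‖ ^ 2) + (k : ℝ) * a ^ 2) := by ring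
      have h7 : |z| ≤ η / 2 * (nsq y + (k : ℝ) * nsq x) := by
        rw [← h6]
        exact h1.trans (h4.trans h5)
      have h8 : η / 2 * (nsq y + (k : ℝ) * nsq x) ≤ ε / 2 * (nsq x + nsq y) := by
        rw [← hηε]
        have e1 : 0 ≤ η * nsq x := mul_nonneg hη0.le (nsq_nonneg x)
        have e2 : 0 ≤ η * ((k:ℝ) * nsq y) :=
          mul_nonneg hη0.le (mul_nonneg (Nat.cast_nonneg k) (nsq_nonneg y))
        nlinarith [e1, e2]
      exact h7.trans h8
    have hzlow := (abs_le.mp hzbound).1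
    have hzhigh := (abs_le.mp hzbound).2
    obtain ⟨hb1, hb2⟩ := hbd y
    have h7 : m * nsq x ≤ μ.re * nsq x := mul_le_mul_of_nonneg_right hm (nsq_nonneg x)
    have h7' : μ.re * nsq x ≤ M * nsq x := mul_le_mul_of_nonneg_right hM (nsq_nonneg x)
    have h8 : 0 ≤ ε * nsq x := mul_nonneg hε.le (nsq_nonneg x)
    constructor
    · rw [hqf, hsplit, hnsq]
      linarith
    · rw [hqf, hsplit, hnsq]
      linarith

/-- Split an index type at a distinguished element. -/
def splitEquiv (i₀ : ι) : ι ≃ (Unit ⊕ {i : ι // i ≠ i₀}) where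
  toFun i := if h : i = i₀ then Sum.inl () else Sum.inr ⟨i, h⟩
  invFun := Sum.elim (fun _ => i₀) (fun j => (j : ι))
  left_inv i := by by_cases h : i = i₀ <;> simp [h]
  right_inv j := by
    rcases j with ⟨⟩ | ⟨j, hj⟩
    · simp
    · simp [hj]

@[simp] lemma splitEquiv_symm_inl (i₀ : ι) (u : Unit) :
    (splitEquiv i₀).symm (Sum.inl u) = i₀ := rfl

@[simp] lemma splitEquiv_symm_inr (i₀ : ι) (j : {i : ι // i ≠ i₀}) :
    (splitEquiv i₀).symm (Sum.inr j) = (j : ι) := rfl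

lemma key (n : ℕ) : ∀ (ι : Type) [Fintype ι] [DecidableEq ι] (A : Matrix ι ι ℂ)
    (m M ε : ℝ), 0 < ε → Fintype.card ι = n →
    (∀ μ ∈ spectrum ℂ A, m ≤ μ.re ∧ μ.re ≤ M) → Claim A m M ε := by
  induction n with
  | zero =>
    intro ι _ _ A m M ε hε hcard _
    have : IsEmpty ι := Fintype.card_eq_zero_iff.mp hcard
    refine ⟨1, by simp, fun w => ?_⟩
    have h0 : nsq w = 0 := by rw [nsq_eq]; simp
    have h1 : qf (1 * A * 1⁻¹) w = 0 := by
      rw [qf]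
      have h2 : star ((1 * A * 1⁻¹) *ᵥ w) ⬝ᵥ w = 0 := by
        rw [dotProduct]; simp
      rw [h2, Complex.zero_re]
    rw [h0, h1, mul_zero, mul_zero]
    exact ⟨le_refl 0, le_refl 0⟩
  | succ n IH =>
    intro ι _ _ A m M ε hε hcard hspec
    have hne : Nonempty ι := Fintype.card_pos_iff.mp (by omega)
    obtain ⟨μ, hμ⟩ := spectrum.nonempty_of_isAlgClosed_of_finiteDimensional ℂ A
    have hdet0 : (μ • (1 : Matrix ι ι ℂ) - A).det = 0 := (spec_iff A μ).mp hμ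
    obtain ⟨v, hv0, hveq⟩ := (Matrix.exists_mulVec_eq_zero_iff).mpr hdet0
    have hAv : A *ᵥ v = μ • v := by
      rw [Matrix.sub_mulVec, sub_eq_zero, Matrix.smul_mulVec, Matrix.one_mulVec] at hveq
      exact hveq.symm
    obtain ⟨i₀, hi₀⟩ : ∃ i, v i ≠ 0 := by
      by_contra h; push_neg at h; exact hv0 (funext h)
    set E : Matrix ι ι ℂ := (1 : Matrix ι ι ℂ).updateCol i₀ v with hE
    have hEdet : E.det = v i₀ := by
      rw [hE, ← Matrix.cramer_apply, Matrix.cramer_one]; rfl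
    have hEunit : IsUnit E.det := by rw [hEdet]; exact hi₀.isUnit
    have hEcol : E *ᵥ (Pi.single i₀ 1 : ι → ℂ) = v := by
      rw [Matrix.mulVec_single_one]
      funext j
      simp [hE, Matrix.updateCol_apply]
    set B := E⁻¹ * A * E with hB
    have hBv : B *ᵥ (Pi.single i₀ 1 : ι → ℂ) = μ • (Pi.single i₀ 1 : ι → ℂ) := by
      rw [hB, ← Matrix.mulVec_mulVec, ← Matrix.mulVec_mulVec, hEcol, hAv, Matrix.mulVec_smul,
        ← hEcol, Matrix.mulVec_mulVec, Matrix.nonsing_inv_mul _ hEunit, Matrix.one_mulVec]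
    have hBcol : ∀ j, B j i₀ = if j = i₀ then μ else 0 := by
      intro j
      have h2 : B j i₀ * 1 = (μ • (Pi.single i₀ 1 : ι → ℂ)) j := by
        rw [← hBv, Matrix.mulVec_single]; simp
      rw [mul_one] at h2
      rw [h2, Pi.smul_apply, Pi.single_apply, smul_eq_mul]
      by_cases h : j = i₀ <;> simp [h]
    set C := B.submatrix ((splitEquiv i₀).symm) ((splitEquiv i₀).symm) with hC
    set r₁ := C.toBlocks₁₂ with hr₁
    set A₁ := C.toBlocks₂₂ with hA₁
    have hCblocks : C = fromBlocks (μ • (1 : Matrix Unit Unit ℂ)) r₁ 0 A₁ := by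
      rw [hr₁, hA₁]
      ext i j
      rcases i with ⟨⟩ | i <;> rcases j with ⟨⟩ | j
      · simp [Matrix.fromBlocks, hC, Matrix.submatrix_apply, hBcol, Matrix.one_apply]
      · simp [Matrix.fromBlocks, Matrix.toBlocks₁₂]
      · simp [Matrix.fromBlocks, hC, Matrix.submatrix_apply, hBcol, i.2]
      · simp [Matrix.fromBlocks, Matrix.toBlocks₂₂]
    have hdetC : ∀ ν : ℂ,
        (ν • (1 : Matrix (Unit ⊕ {i : ι // i ≠ i₀}) (Unit ⊕ {i : ι // i ≠ i₀}) ℂ) - C).det =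
        (ν • (1 : Matrix ι ι ℂ) - A).det := by
      intro ν
      rw [hC, det_smul_one_sub_submatrix ((splitEquiv i₀).symm) B ν, hB,
        det_smul_one_sub_conj E A hEunit ν]
    have hspecA₁ : ∀ ν ∈ spectrum ℂ A₁, m ≤ ν.re ∧ ν.re ≤ M := by
      intro ν hν
      apply hspec
      rw [spec_iff] at hν ⊢
      rw [← hdetC ν, hCblocks]
      have hsub : ν • (1 : Matrix (Unit ⊕ {i : ι // i ≠ i₀}) (Unit ⊕ {i : ι // i ≠ i₀}) ℂ) -
          fromBlocks (μ • (1 : Matrix Unit Unit ℂ)) r₁ 0 A₁ =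
          fromBlocks (ν • (1 : Matrix Unit Unit ℂ) - μ • 1) (-r₁) 0 (ν • 1 - A₁) := by
        ext i j
        rcases i with ⟨⟩ | i <;> rcases j with ⟨⟩ | j <;>
          simp [Matrix.fromBlocks, Matrix.one_apply, Matrix.sub_apply, Matrix.smul_apply]
      rw [hsub, Matrix.det_fromBlocks_zero₂₁, hν, mul_zero]
    have hcard' : Fintype.card {i : ι // i ≠ i₀} = n := by
      have h1 := Fintype.card_subtype_compl (fun i : ι => i = i₀)
      rw [Fintype.card_subtype_eq, hcard] at h1
      simpa using h1
    have IH₁ : Claim A₁ m M (ε/2) := IH _ A₁ m M (ε/2) (by positivity) hcard' hspecA₁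
    have hstep : Claim (fromBlocks (μ • (1 : Matrix Unit Unit ℂ)) r₁ 0 A₁) m M ε :=
      claim_step μ r₁ A₁ m M ε hε (hspec μ hμ).1 (hspec μ hμ).2 IH₁
    have hclaimC : Claim C m M ε := by rw [hCblocks]; exact hstep
    have hclaimB : Claim B m M ε := claim_transfer (splitEquiv i₀) B (hC ▸ hclaimC)
    exact claim_conj E A hEunit (hB ▸ hclaimB)

end AdaptedInnerAux

/-- For any complex matrix `A` and `ε > 0`, there is a Hermitian positive
definite `H` such that `Re⟨HAv,v⟩` is pinched, up to `ε`, between the extreme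
real parts of the spectrum of `A` times `⟨Hv,v⟩`. -/
theorem exists_adapted_inner_product (n : ℕ) (A : Matrix (Fin n) (Fin n) ℂ)
    (ε : ℝ) (hε : 0 < ε) (m M : ℝ)
    (hm : IsLeast {x : ℝ | ∃ μ : ℂ, μ ∈ spectrum ℂ A ∧ μ.re = x} m)
    (hM : IsGreatest {x : ℝ | ∃ μ : ℂ, μ ∈ spectrum ℂ A ∧ μ.re = x} M) :
    ∃ H : Matrix (Fin n) (Fin n) ℂ, H.IsHermitian ∧ H.PosDef ∧
      ∀ v : Fin n → ℂ,
        (m - ε) * (star (H *ᵥ v) ⬝ᵥ v).re ≤ (star (H *ᵥ (A *ᵥ v)) ⬝ᵥ v).re ∧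
        (star (H *ᵥ (A *ᵥ v)) ⬝ᵥ v).re ≤ (M + ε) * (star (H *ᵥ v) ⬝ᵥ v).re := by
  classical
  have hbounds : ∀ μ ∈ spectrum ℂ A, m ≤ μ.re ∧ μ.re ≤ M := fun μ hμ =>
    ⟨hm.2 ⟨μ, hμ, rfl⟩, hM.2 ⟨μ, hμ, rfl⟩⟩
  obtain ⟨P, hP, hbd⟩ :=
    AdaptedInnerAux.key n (Fin n) A m M ε hε (Fintype.card_fin n) hbounds
  have hPunit : IsUnit P := (Matrix.isUnit_iff_isUnit_det P).mpr hP
  have herm : (Pᴴ * P).IsHermitian := by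
    have h := Matrix.isHermitian_mul_conjTranspose_self Pᴴ
    rwa [Matrix.conjTranspose_conjTranspose] at h
  -- basic dot product identities
  have hdot1 : ∀ u : Fin n → ℂ, star ((Pᴴ * P) *ᵥ u) = star (P *ᵥ u) ᵥ* P := by
    intro u
    rw [← Matrix.mulVec_mulVec, Matrix.star_mulVec, Matrix.conjTranspose_conjTranspose]
  refine ⟨Pᴴ * P, herm, Matrix.PosDef.of_dotProduct_mulVec_pos herm (fun x hx => ?_), fun v => ?_⟩
  · -- positive definiteness
    have h1 : star x ⬝ᵥ ((Pᴴ * P) *ᵥ x) = star (P *ᵥ x) ⬝ᵥ (P *ᵥ x) := by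
      rw [← Matrix.mulVec_mulVec, Matrix.dotProduct_mulVec, ← Matrix.star_mulVec]
    rw [h1, AdaptedInnerAux.star_dot_self]
    rw [Complex.zero_lt_real]
    have hPx : P *ᵥ x ≠ 0 := by
      intro h
      apply hx
      have hinj := Matrix.mulVec_injective_iff_isUnit.mpr hPunit
      apply hinj
      rw [h, Matrix.mulVec_zero]
    obtain ⟨i, hi⟩ : ∃ i, (P *ᵥ x) i ≠ 0 := by
      by_contra h; push_neg at h; exact hPx (funext h)
    refine Finset.sum_pos' (fun j _ => Complex.normSq_nonneg _) ⟨i, Finset.mem_univ i, ?_⟩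
    exact Complex.normSq_pos.mpr hi
  · -- the pinching inequalities
    have e1 : star ((Pᴴ * P) *ᵥ v) ⬝ᵥ v = star (P *ᵥ v) ⬝ᵥ (P *ᵥ v) := by
      rw [hdot1, ← Matrix.dotProduct_mulVec]
    have e2 : star ((Pᴴ * P) *ᵥ (A *ᵥ v)) ⬝ᵥ v =
        star ((P * A * P⁻¹) *ᵥ (P *ᵥ v)) ⬝ᵥ (P *ᵥ v) := by
      rw [hdot1, ← Matrix.dotProduct_mulVec]
      have hcancel : (P * A * P⁻¹) * P = P * A := by
        rw [Matrix.mul_assoc (P * A), Matrix.nonsing_inv_mul _ hP, Matrix.mul_one]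
      rw [Matrix.mulVec_mulVec, Matrix.mulVec_mulVec, hcancel]
    have h3 := hbd (P *ᵥ v)
    rw [AdaptedInnerAux.qf, AdaptedInnerAux.nsq] at h3
    rw [e1, e2]
    exact h3
end
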